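/- Let λ be a regular cardinal and F = {i_{αβ} : B_α → B_β : α ≤ β < λ} be a complete iteration system such that every antichain of C(F) has cardinality < λ (C(F) is <λ-cc). Then T(F) = C(F), i.e. every thread is a constant thread, and this partial order is a complete Boolean algebra. -/

import Mathlib

/-- A complete iteration system of complete Boolean algebras indexed by `ι`:
regular embeddings `emb : B a → B b` for `a ≤ b` (injective Boolean algebra
homomorphisms preserving arbitrary suprema) which commute and are the identity
on the diagonal. -/
structure IterSys (ι : Type*) [Preorder ι] where
  B : ι → Type
  cba : ∀ a, CompleteBooleanAlgebra (B a)
  emb : ∀ {a b : ι}, a ≤ b → B a → B b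
  emb_refl : ∀ (a : ι) (x : B a), emb (le_refl a) x = x
  emb_trans : ∀ {a b c : ι} (hab : a ≤ b) (hbc : b ≤ c) (x : B a),
    emb hbc (emb hab x) = emb (hab.trans hbc) x
  emb_inj : ∀ {a b : ι} (h : a ≤ b), Function.Injective (emb h)
  emb_sSup : ∀ {a b : ι} (h : a ≤ b) (S : Set (B a)), emb h (sSup S) = sSup (emb h '' S)
  emb_inf : ∀ {a b : ι} (h : a ≤ b) (x y : B a), emb h (x ⊓ y) = emb h x ⊓ emb h y
  emb_compl : ∀ {a b : ι} (h : a ≤ b) (x : B a), emb h xᶜ = (emb h x)ᶜ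
  emb_top : ∀ {a b : ι} (h : a ≤ b), emb h (⊤ : B a) = (⊤ : B b)

attribute [instance] IterSys.cba

namespace IterSys

variable {ι : Type*} [Preorder ι] (F : IterSys ι)

/-- The retraction `π_{a b}` associated to the regular embedding `i_{a b}`. -/
def ret {a b : ι} (h : a ≤ b) (c : F.B b) : F.B a :=
  sInf {x : F.B a | c ≤ F.emb h x}

/-- A thread of the iteration system (an element of the inverse limit `T(F)`). -/
def IsThread (f : ∀ a, F.B a) : Prop :=
  ∀ {a b : ι} (h : a ≤ b), F.ret h (f b) = f a

/-- A constant thread (an element of the direct limit `C(F)`). -/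
def IsConstThread (f : ∀ a, F.B a) : Prop :=
  F.IsThread f ∧ ∃ a : ι, ∀ (b : ι) (h : a ≤ b), f b = F.emb h (f a)

/-- The pointwise order on threads. -/
def ThreadLE (f g : ∀ a, F.B a) : Prop := ∀ a, f a ≤ g a

/-- A thread is nonzero if some (equivalently, cofinally many) of its coordinates
are nonzero. -/
def NonzeroThread (f : ∀ a, F.B a) : Prop := ∃ a, f a ≠ ⊥

/-- Two threads are compatible in `T(F)` if some nonzero thread lies below both. -/
def Compat (f g : ∀ a, F.B a) : Prop :=
  ∃ h, F.IsThread h ∧ F.NonzeroThread h ∧ F.ThreadLE h f ∧ F.ThreadLE h g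

/-- Two constant threads are compatible in `C(F)` if some nonzero constant thread
lies below both. -/
def ConstCompat (f g : ∀ a, F.B a) : Prop :=
  ∃ h, F.IsConstThread h ∧ F.NonzeroThread h ∧ F.ThreadLE h f ∧ F.ThreadLE h g

end IterSys

/-!
If a thread `f` is not eventually constant, then above every level `a` there is a level
`g a` at which `f` shrinks: the gap `i_{a,g a}(f a) \ f (g a)` is nonzero. Gaps taken at levels
`a < g a ≤ a' < g a'` are disjoint, so the constant threads they generate form an antichain of
`C(F)` indexed by any `g`-separated set of levels. As `λ` is regular and its proper initial
segments are small, a maximal `g`-separated set has size `λ`, contradicting the chain condition.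

Once every thread is constant, `T(F)` is the directed union of the images of the lattice
embeddings `B_a → T(F)`, so the distributive and complement laws transfer from the `B_a`.
Suprema of threads are computed coordinatewise, since the retractions are left adjoints.
-/

namespace IterSys

section Preorder

variable {ι : Type*} [Preorder ι] (F : IterSys ι)

theorem emb_le_emb_iff {a b : ι} (h : a ≤ b) {x y : F.B a} :
    F.emb h x ≤ F.emb h y ↔ x ≤ y := by
  rw [← inf_eq_left, ← F.emb_inf, (F.emb_inj h).eq_iff, inf_eq_left]

theorem emb_bot {a b : ι} (h : a ≤ b) : F.emb h (⊥ : F.B a) = ⊥ := by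
  rw [← compl_top, F.emb_compl, F.emb_top, compl_top]

theorem emb_sup {a b : ι} (h : a ≤ b) (x y : F.B a) :
    F.emb h (x ⊔ y) = F.emb h x ⊔ F.emb h y := by
  rw [← compl_compl (x ⊔ y), compl_sup, F.emb_compl, F.emb_inf, F.emb_compl, F.emb_compl,
    compl_inf, compl_compl, compl_compl]

theorem emb_sInf {a b : ι} (h : a ≤ b) (S : Set (F.B a)) :
    F.emb h (sInf S) = sInf (F.emb h '' S) := by
  rw [← compl_compl (sInf S), compl_sInf', F.emb_compl, F.emb_sSup, compl_sSup',
    Set.image_image, Set.image_image]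
  simp only [F.emb_compl, compl_compl]

theorem gc_ret_emb {a b : ι} (h : a ≤ b) : GaloisConnection (F.ret h) (F.emb h) := by
  refine fun c x => ⟨fun hle => ?_, fun hle => sInf_le hle⟩
  refine le_trans ?_ ((F.emb_le_emb_iff h).2 hle)
  rw [ret, emb_sInf]
  exact le_sInf (Set.forall_mem_image.2 fun _ => id)

theorem ret_emb {a b : ι} (h : a ≤ b) (x : F.B a) : F.ret h (F.emb h x) = x :=
  le_antisymm ((F.gc_ret_emb h).l_le le_rfl) ((F.emb_le_emb_iff h).1 ((F.gc_ret_emb h).le_u_l _))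

theorem emb_sdiff {a b : ι} (h : a ≤ b) (x y : F.B a) :
    F.emb h (x \ y) = F.emb h x \ F.emb h y := by
  rw [sdiff_eq, sdiff_eq, F.emb_inf, F.emb_compl]

theorem ret_ret {a b c : ι} (hab : a ≤ b) (hbc : b ≤ c) (x : F.B c) :
    F.ret hab (F.ret hbc x) = F.ret (hab.trans hbc) x :=
  ((F.gc_ret_emb hbc).compose (F.gc_ret_emb hab)).l_unique (F.gc_ret_emb (hab.trans hbc))
    (F.emb_trans hab hbc)

def gap (f : ∀ a, F.B a) {a b : ι} (h : a ≤ b) : F.B b :=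
  F.emb h (f a) \ f b

variable {F} {f g : ∀ a, F.B a}

theorem IsThread.le_emb (hf : F.IsThread f) {a b : ι} (h : a ≤ b) : f b ≤ F.emb h (f a) :=
  hf h ▸ (F.gc_ret_emb h).le_u_l (f b)

theorem IsThread.gap_eq_bot_iff (hf : F.IsThread f) {a b : ι} (h : a ≤ b) :
    F.gap f h = ⊥ ↔ f b = F.emb h (f a) := by
  rw [gap, sdiff_eq_bot_iff, le_antisymm_iff, and_iff_right (hf.le_emb h)]

theorem IsThread.disjoint_emb_gap_gap (hf : F.IsThread f) {a b a' b' : ι} (hab : a ≤ b)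
    (hba' : b ≤ a') (ha'b' : a' ≤ b') :
    Disjoint (F.emb (hba'.trans ha'b') (F.gap f hab)) (F.gap f ha'b') := by
  have hgap : F.gap f ha'b' ≤ F.emb (hba'.trans ha'b') (f b) := calc
    F.gap f ha'b' ≤ F.emb ha'b' (f a') := sdiff_le
    _ ≤ F.emb ha'b' (F.emb hba' (f b)) := (F.emb_le_emb_iff ha'b').2 (hf.le_emb hba')
    _ = F.emb (hba'.trans ha'b') (f b) := F.emb_trans hba' ha'b' (f b)
  rw [gap, emb_sdiff]
  exact Disjoint.mono_right hgap disjoint_sdiff_self_left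

theorem ConstCompat.symm (h : F.ConstCompat f g) : F.ConstCompat g f :=
  let ⟨p, hp, hp0, hpf, hpg⟩ := h
  ⟨p, hp, hp0, hpg, hpf⟩

theorem constCompat_self (hf : F.IsConstThread f) (hf0 : F.NonzeroThread f) :
    F.ConstCompat f f :=
  ⟨f, hf, hf0, fun _ => le_rfl, fun _ => le_rfl⟩

end Preorder

section ThreadLattice

variable {ι : Type*} [Preorder ι] (F : IterSys ι)

/-- The inverse limit `T(F)`, ordered pointwise. -/
abbrev Thread : Type _ := {f : ∀ a, F.B a // F.IsThread f}

variable {F}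

theorem Thread.le_def {x y : F.Thread} : x ≤ y ↔ ∀ a, x.1 a ≤ y.1 a := Iff.rfl

instance : SupSet F.Thread where
  sSup S := ⟨fun a => ⨆ x : S, x.1.1 a, fun h => by
    rw [(F.gc_ret_emb h).l_iSup]
    exact iSup_congr fun x => x.1.2 h⟩

theorem Thread.isLUB_sSup (S : Set F.Thread) : IsLUB S (sSup S) :=
  ⟨fun x hx a => le_iSup (fun y : S => y.1.1 a) ⟨x, hx⟩,
    fun _ hy a => iSup_le fun x => hy x.2 a⟩

instance : CompleteLattice F.Thread := completeLatticeOfSup _ Thread.isLUB_sSup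

end ThreadLattice

section LinearOrder

variable {ι : Type*} [LinearOrder ι] (F : IterSys ι)

noncomputable def constThread (a : ι) (x : F.B a) : ∀ b, F.B b := fun b =>
  if h : a ≤ b then F.emb h x else F.ret (le_of_not_ge h) x

theorem constThread_of_le {a b : ι} (h : a ≤ b) (x : F.B a) :
    F.constThread a x b = F.emb h x :=
  dif_pos h

theorem constThread_self (a : ι) (x : F.B a) : F.constThread a x a = x := by
  rw [F.constThread_of_le le_rfl, F.emb_refl]

theorem constThread_of_ge {a b : ι} (h : b ≤ a) (x : F.B a) :
    F.constThread a x b = F.ret h x := by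
  rcases h.eq_or_lt with rfl | hlt
  · rw [F.constThread_self, ← F.emb_refl b x, F.ret_emb, F.emb_refl]
  · exact dif_neg hlt.not_ge

theorem isThread_constThread (a : ι) (x : F.B a) : F.IsThread (F.constThread a x) := by
  intro b c hbc
  rcases le_total a b with hab | hba
  · rw [F.constThread_of_le (hab.trans hbc), F.constThread_of_le hab, ← F.emb_trans hab hbc,
      F.ret_emb]
  rcases le_total a c with hac | hca
  · rw [F.constThread_of_le hac, F.constThread_of_ge hba, ← F.ret_ret hba hac, F.ret_emb]
  · rw [F.constThread_of_ge hca, F.constThread_of_ge hba, F.ret_ret]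

theorem isConstThread_constThread (a : ι) (x : F.B a) :
    F.IsConstThread (F.constThread a x) :=
  ⟨F.isThread_constThread a x, a, fun b h => by rw [F.constThread_of_le h, F.constThread_self]⟩

variable {F} {f : ∀ a, F.B a}

theorem IsThread.eq_constThread (hf : F.IsThread f) {a : ι}
    (ha : ∀ b (h : a ≤ b), f b = F.emb h (f a)) : f = F.constThread a (f a) := by
  funext b
  rcases le_total a b with h | h
  · rw [F.constThread_of_le h, ha b h]
  · rw [F.constThread_of_ge h, hf h]

theorem IsConstThread.eventually_eq_constThread (hf : F.IsConstThread f) :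
    ∀ᶠ a in Filter.atTop, f = F.constThread a (f a) := by
  obtain ⟨hf, a, ha⟩ := hf
  refine (Filter.eventually_ge_atTop a).mono fun a' haa' => hf.eq_constThread fun b h => ?_
  rw [ha b (haa'.trans h), ha a' haa', F.emb_trans]

theorem nonzeroThread_constThread {a : ι} {x : F.B a} (hx : x ≠ ⊥) :
    F.NonzeroThread (F.constThread a x) :=
  ⟨a, by rwa [F.constThread_self]⟩

theorem not_constCompat_constThread {a b : ι} (hab : a ≤ b) {x : F.B a} {y : F.B b}
    (hxy : Disjoint (F.emb hab x) y) :
    ¬ F.ConstCompat (F.constThread a x) (F.constThread b y) := by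
  rintro ⟨p, ⟨hp, -⟩, ⟨c, hc⟩, hpx, hpy⟩
  have hbd : b ≤ max c b := le_max_right c b
  have hpd : p (max c b) = ⊥ := le_bot_iff.1 <| calc
    p (max c b) ≤ F.constThread a x (max c b) ⊓ F.constThread b y (max c b) :=
      le_inf (hpx _) (hpy _)
    _ = F.emb hbd (F.emb hab x ⊓ y) := by
      rw [F.constThread_of_le (hab.trans hbd), F.constThread_of_le hbd, ← F.emb_trans hab hbd,
        F.emb_inf]
    _ = ⊥ := by rw [hxy.eq_bot, F.emb_bot]
  exact hc (by rw [← hp (le_max_left c b), hpd, (F.gc_ret_emb _).l_bot])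

theorem constThread_bot (a b : ι) : F.constThread a ⊥ b = ⊥ := by
  rcases le_total a b with h | h
  · rw [F.constThread_of_le h, F.emb_bot]
  · rw [F.constThread_of_ge h, (F.gc_ret_emb h).l_bot]

theorem constThread_top (a b : ι) : F.constThread a ⊤ b = ⊤ := by
  rcases le_total a b with h | h
  · rw [F.constThread_of_le h, F.emb_top]
  · rw [F.constThread_of_ge h, ← F.emb_top h, F.ret_emb]

theorem IsThread.le_constThread_iff (hf : F.IsThread f) {a : ι} {x : F.B a} :
    (∀ b, f b ≤ F.constThread a x b) ↔ f a ≤ x := by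
  refine ⟨fun h => F.constThread_self a x ▸ h a, fun h b => ?_⟩
  rcases le_total a b with hab | hba
  · exact (hf.le_emb hab).trans ((F.constThread_of_le hab x).symm ▸ (F.emb_le_emb_iff hab).2 h)
  · rw [F.constThread_of_ge hba, ← hf hba]
    exact (F.gc_ret_emb hba).monotone_l h

theorem IsThread.constThread_le_iff (hf : F.IsThread f) {a : ι} {x : F.B a} :
    (∀ b, F.constThread a x b ≤ f b) ↔ ∀ b (h : a ≤ b), F.emb h x ≤ f b := by
  refine ⟨fun hx b h => F.constThread_of_le h x ▸ hx b, fun hx b => ?_⟩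
  rcases le_total a b with hab | hba
  · exact F.constThread_of_le hab x ▸ hx b hab
  · rw [F.constThread_of_ge hba, ← hf hba]
    exact (F.gc_ret_emb hba).monotone_l (F.emb_refl a x ▸ hx a le_rfl)

variable (F)

noncomputable def constThreadHom (a : ι) : BoundedLatticeHom (F.B a) F.Thread where
  toFun x := ⟨F.constThread a x, F.isThread_constThread a x⟩
  map_sup' x y := eq_of_forall_ge_iff fun p => by
    simp only [sup_le_iff, Thread.le_def, IsThread.constThread_le_iff p.2, F.emb_sup,
      ← forall_and]
  map_inf' x y := eq_of_forall_le_iff fun p => by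
    simp only [le_inf_iff, Thread.le_def, IsThread.le_constThread_iff p.2]
  map_top' := top_unique fun b => le_top.trans_eq (F.constThread_top a b).symm
  map_bot' := bot_unique fun b => (F.constThread_bot a b).trans_le bot_le

end LinearOrder

end IterSys

section RegularCardinal

open Cardinal

theorem exists_forall_lt_of_mk_lt {ι : Type*} [LinearOrder ι] {κ : Cardinal}
    (hreg : κ.IsRegular) (hκ : κ ≤ #ι) (hinit : ∀ x : ι, #{y : ι // y < x} < κ)
    {T : Set ι} (hT : #T < κ) :
    ∃ x, ∀ y ∈ T, y < x := by
  by_contra! hcof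
  have hcover : (Set.univ : Set ι) ⊆ ⋃ y : T, Set.Iic (y : ι) := fun x _ =>
    let ⟨y, hy, hxy⟩ := hcof x
    Set.mem_iUnion.2 ⟨⟨y, hy⟩, hxy⟩
  have hIic : ∀ y : T, #(Set.Iic (y : ι)) < κ := fun y => calc
    #(Set.Iic (y : ι)) ≤ #(Set.Iio (y : ι)) + 1 := by
      rw [← Set.Iio_insert]; exact mk_insert_le
    _ < κ := add_lt_of_lt hreg.aleph0_le (hinit y) (one_lt_aleph0.trans_le hreg.aleph0_le)
  refine (hκ.trans ?_).not_gt (sum_lt_of_isRegular hreg hT hIic)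
  calc #ι = #(Set.univ : Set ι) := mk_univ.symm
    _ ≤ #(⋃ y : T, Set.Iic (y : ι)) := mk_le_mk_of_subset hcover
    _ ≤ sum fun y : T => #(Set.Iic (y : ι)) := mk_iUnion_le_sum_mk

theorem exists_le_mk_forall_lt_imp_le {ι : Type*} [LinearOrder ι] {κ : Cardinal}
    (hbdd : ∀ T : Set ι, #T < κ → ∃ x, ∀ y ∈ T, y < x) (g : ι → ι) :
    ∃ S : Set ι, κ ≤ #S ∧ ∀ x ∈ S, ∀ y ∈ S, x < y → g x ≤ y := by
  let Sep : Set (Set ι) := {S | ∀ x ∈ S, ∀ y ∈ S, x < y → g x ≤ y}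
  obtain ⟨S, hS⟩ := zorn_subset Sep fun C hC hchain =>
    ⟨⋃₀ C, fun x ⟨s, hs, hxs⟩ y ⟨s', hs', hys'⟩ hxy =>
      (hchain.total hs hs').elim (fun hss => hC hs' x (hss hxs) y hys' hxy)
        (fun hss => hC hs x hxs y (hss hys') hxy),
      fun _ => Set.subset_sUnion_of_mem⟩
  refine ⟨S, not_lt.1 fun hSlt => ?_, hS.prop⟩
  obtain ⟨x₁, hx₁⟩ := hbdd S hSlt
  obtain ⟨x₂, hx₂⟩ := hbdd (g '' S) (mk_image_le.trans_lt hSlt)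
  have hx₁ : ∀ y ∈ S, y < max x₁ x₂ := fun y hy => (hx₁ y hy).trans_le (le_max_left _ _)
  have hx₂ : ∀ y ∈ S, g y < max x₁ x₂ := fun y hy =>
    (hx₂ _ (Set.mem_image_of_mem g hy)).trans_le (le_max_right _ _)
  have hins : insert (max x₁ x₂) S ∈ Sep := by
    rintro u (rfl | hu) v (rfl | hv) huv
    · exact absurd huv (lt_irrefl _)
    · exact absurd (hx₁ v hv) huv.not_gt
    · exact (hx₂ u hu).le
    · exact hS.prop u hu v hv huv
  exact (hx₁ _ (hS.eq_of_subset hins (Set.subset_insert _ S) ▸ Set.mem_insert _ S)).false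

end RegularCardinal

namespace IterSys

section ChainCondition

open Cardinal

variable {ι : Type*} [LinearOrder ι] {F : IterSys ι} {κ : Cardinal}
  (hcc : ∀ A : Set (∀ a, F.B a), (∀ f ∈ A, F.IsConstThread f) →
      (∀ f ∈ A, ∀ g ∈ A, f ≠ g → ¬ F.ConstCompat f g) → #A < κ)
include hcc

theorem mk_lt_of_forall_lt_not_constCompat {S : Set ι} (t : ι → ∀ a, F.B a)
    (ht : ∀ a ∈ S, F.IsConstThread (t a) ∧ F.NonzeroThread (t a))
    (hanti : ∀ a ∈ S, ∀ a' ∈ S, a < a' → ¬ F.ConstCompat (t a) (t a')) : #S < κ := by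
  have hanti' : ∀ a ∈ S, ∀ a' ∈ S, a ≠ a' → ¬ F.ConstCompat (t a) (t a') := by
    intro a ha a' ha' hne
    rcases hne.lt_or_gt with h | h
    · exact hanti a ha a' ha' h
    · exact fun hc => hanti a' ha' a ha h hc.symm
  have hinj : Set.InjOn t S := fun a ha a' ha' heq => by_contra fun hne =>
    hanti' a ha a' ha' hne (heq ▸ constCompat_self (ht a ha).1 (ht a ha).2)
  rw [← mk_image_eq_of_injOn t S hinj]
  refine hcc _ (Set.forall_mem_image.2 fun a ha => (ht a ha).1) ?_
  rintro _ ⟨a, ha, rfl⟩ _ ⟨a', ha', rfl⟩ hne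
  exact hanti' a ha a' ha' fun h => hne (h ▸ rfl)

theorem isConstThread_of_isThread (hreg : κ.IsRegular) (hκ : κ ≤ #ι)
    (hinit : ∀ x : ι, #{y : ι // y < x} < κ) {f : ∀ a, F.B a} (hf : F.IsThread f) :
    F.IsConstThread f := by
  by_contra hnc
  have hgap : ∀ a, ∃ b, ∃ h : a ≤ b, F.gap f h ≠ ⊥ := by
    by_contra! h
    obtain ⟨a, ha⟩ := h
    exact hnc ⟨hf, a, fun b h => (hf.gap_eq_bot_iff h).1 (ha b h)⟩
  choose g hg hgap using hgap
  obtain ⟨S, hS, hsep⟩ :=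
    exists_le_mk_forall_lt_imp_le (fun _ => exists_forall_lt_of_mk_lt hreg hκ hinit) g
  refine hS.not_gt (mk_lt_of_forall_lt_not_constCompat hcc
    (fun a => F.constThread (g a) (F.gap f (hg a)))
    (fun a _ => ⟨F.isConstThread_constThread _ _, nonzeroThread_constThread (hgap a)⟩)
    fun a ha a' ha' h => ?_)
  exact not_constCompat_constThread _ (hf.disjoint_emb_gap_gap (hg a) (hsep a ha a' ha' h) (hg a'))

end ChainCondition

section ThreadBooleanAlgebra

variable {ι : Type*} [LinearOrder ι] {F : IterSys ι}
  (hconst : ∀ f : ∀ a, F.B a, F.IsThread f → F.IsConstThread f)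
include hconst

theorem Thread.eventually_eq_constThreadHom (x : F.Thread) :
    ∀ᶠ a in Filter.atTop, x = F.constThreadHom a (x.1 a) :=
  (hconst x.1 x.2).eventually_eq_constThread.mono fun _ h => Subtype.ext h

noncomputable abbrev Thread.completeBooleanAlgebra : CompleteBooleanAlgebra F.Thread :=
  letI : DistribLattice F.Thread := DistribLattice.ofInfSupLe fun x y z => by
    have : Nonempty ι := (hconst x.1 x.2).2.nonempty
    obtain ⟨a, hx, hy, hz⟩ := ((Thread.eventually_eq_constThreadHom hconst x).and
      ((Thread.eventually_eq_constThreadHom hconst y).and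
        (Thread.eventually_eq_constThreadHom hconst z))).exists
    rw [hx, hy, hz]
    simp only [← map_sup, ← map_inf]
    exact OrderHomClass.mono _ (inf_sup_left _ _ _).le
  have : ComplementedLattice F.Thread := ⟨fun x => by
    have : Nonempty ι := (hconst x.1 x.2).2.nonempty
    obtain ⟨a, hx⟩ := (Thread.eventually_eq_constThreadHom hconst x).exists
    exact ⟨_, hx ▸ isCompl_compl.map (F.constThreadHom a)⟩⟩
  { (inferInstance : CompleteLattice F.Thread),
    DistribLattice.booleanAlgebraOfComplemented F.Thread with }

end ThreadBooleanAlgebra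

end IterSys

theorem stmt9_general (ι : Type) [LinearOrder ι]
    (κ : Cardinal) (hreg : κ.IsRegular)
    (hcard : Cardinal.mk ι = κ)
    (hinit : ∀ x : ι, Cardinal.mk {y : ι // y < x} < κ)
    (F : IterSys ι)
    (hcc : ∀ A : Set (∀ a, F.B a), (∀ f ∈ A, F.IsConstThread f) →
      (∀ f ∈ A, ∀ g ∈ A, f ≠ g → ¬ F.ConstCompat f g) → Cardinal.mk A < κ) :
    (∀ f : ∀ a, F.B a, F.IsThread f → F.IsConstThread f) ∧
    ∃ s : CompleteBooleanAlgebra {f : ∀ a, F.B a // F.IsThread f},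
      ∀ x y : {f : ∀ a, F.B a // F.IsThread f},
        s.le x y ↔ ∀ a, x.1 a ≤ y.1 a := by
  have hconst : ∀ f : ∀ a, F.B a, F.IsThread f → F.IsConstThread f := fun _ hf =>
    IterSys.isConstThread_of_isThread hcc hreg hcard.ge hinit hf
  exact ⟨hconst, IterSys.Thread.completeBooleanAlgebra hconst, fun _ _ => Iff.rfl⟩

/-- Let `λ` be a regular cardinal (realized as a well-order `ι` of
cardinality `κ` all of whose proper initial segments have size `< κ`, i.e. of order
type `κ`) and `F` a complete iteration system indexed by `ι` such that every
antichain of the direct limit `C(F)` has cardinality `< κ`.  Then every thread is a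
constant thread, i.e. `T(F) = C(F)`, and this partial order (the set of threads with
the pointwise order) carries a complete Boolean algebra structure. -/
theorem stmt9 (ι : Type) [LinearOrder ι] [WellFoundedLT ι]
    (κ : Cardinal) (hreg : κ.IsRegular)
    (hcard : Cardinal.mk ι = κ)
    (hinit : ∀ x : ι, Cardinal.mk {y : ι // y < x} < κ)
    (F : IterSys ι)
    (hcc : ∀ A : Set (∀ a, F.B a), (∀ f ∈ A, F.IsConstThread f) →
      (∀ f ∈ A, ∀ g ∈ A, f ≠ g → ¬ F.ConstCompat f g) → Cardinal.mk A < κ) :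
    (∀ f : ∀ a, F.B a, F.IsThread f → F.IsConstThread f) ∧
    ∃ s : CompleteBooleanAlgebra {f : ∀ a, F.B a // F.IsThread f},
      ∀ x y : {f : ∀ a, F.B a // F.IsThread f},
        s.le x y ↔ ∀ a, x.1 a ≤ y.1 a :=
  stmt9_general ι κ hreg hcard hinit F hcc
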